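/- Let W = (−1/2, 1/2]^k and let Λ ⊂ ℝ^k be a lattice of covolume 1 such that the density D_c(W + Λ) is at least 1/ℓ. Then for every collection of vectors v₁, …, v_ℓ ∈ ℝ^k there exist indices i ≠ i' in {1,…,ℓ} such that D_c((W + Λ + v_i) ∩ (W + Λ + v_{i'})) ≥ 2(ℓ·D_c(W + Λ) − 1)/(ℓ(ℓ−1)). -/

import Mathlib

/-!
Put `A_i = W + Λ + v_i` and `d = D_c(W + Λ)`. Each `A_i` is `Λ`-periodic, so its part in the
fundamental domain `F` has measure `d`. A point lying in exactly `n` of the `A_i` lies in `n(n-1)`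
of the ordered pairwise intersections, and `2n ≤ 2 + n(n-1)` since `(n-1)(n-2) ≥ 0`. Integrating
over `F` gives `2ℓd ≤ 2 + ∑_{i ≠ i'} μ(A_i ∩ A_{i'} ∩ F)`, and the largest of the `ℓ(ℓ-1)` terms
is at least their average.
-/

open MeasureTheory

/-- The set `W + Λ`, where `W = (−1/2, 1/2]^k`. -/
def cubeLat (k : ℕ) (Λ : AddSubgroup (Fin k → ℝ)) : Set (Fin k → ℝ) :=
  {x | ∃ w l : Fin k → ℝ, (∀ i, -(1/2 : ℝ) < w i ∧ w i ≤ 1/2) ∧ l ∈ Λ ∧ x = w + l}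

open ENNReal Pointwise

theorem Finset.two_mul_card_le_two_add_card_offDiag {α : Type*} [DecidableEq α] (s : Finset α) :
    2 * s.card ≤ 2 + s.offDiag.card := by
  rw [Finset.offDiag_card]
  rcases s.card with _ | _ | n
  · simp
  · simp
  · have : (n + 2) * (n + 2) - (n + 2) = (n + 2) * (n + 1) := by
      rw [Nat.sub_eq_of_eq_add]; ring
    rw [this]; nlinarith

theorem Finset.exists_sum_le_card_mul {β : Type*} {s : Finset β} (hs : s.Nonempty)
    (f : β → ℝ≥0∞) : ∃ b ∈ s, ∑ b' ∈ s, f b' ≤ s.card * f b := by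
  obtain ⟨b, hb, hmax⟩ := s.exists_max_image f hs
  exact ⟨b, hb, by simpa only [nsmul_eq_mul] using s.sum_le_card_nsmul f (f b) hmax⟩

section Overlap

variable {α ι : Type*} [Fintype ι] [DecidableEq ι]

theorem two_mul_sum_indicator_le (A : ι → Set α) (x : α) :
    2 * ∑ i, (A i).indicator (1 : α → ℝ≥0∞) x
      ≤ 2 + ∑ p ∈ Finset.univ.offDiag, (A p.1 ∩ A p.2).indicator (1 : α → ℝ≥0∞) x := by
  classical
  set S := Finset.univ.filter fun i => x ∈ A i
  have hsum : ∑ i, (A i).indicator (1 : α → ℝ≥0∞) x = S.card := by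
    simp only [Set.indicator_apply, Pi.one_apply, Finset.sum_boole, S]
  have hpairs : ∑ p ∈ Finset.univ.offDiag, (A p.1 ∩ A p.2).indicator (1 : α → ℝ≥0∞) x
      = S.offDiag.card := by
    simp only [Set.indicator_apply, Pi.one_apply, Set.mem_inter_iff, Finset.sum_boole]
    congr 2
    ext p
    simp [S, Finset.mem_offDiag, and_comm, and_left_comm]
  rw [hsum, hpairs]
  exact_mod_cast S.two_mul_card_le_two_add_card_offDiag

theorem two_mul_sum_measure_le [MeasurableSpace α] (μ : Measure α) {A : ι → Set α}
    (hA : ∀ i, MeasurableSet (A i)) :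
    2 * ∑ i, μ (A i) ≤ 2 * μ Set.univ + ∑ p ∈ Finset.univ.offDiag, μ (A p.1 ∩ A p.2) := by
  have hind : ∀ {B : Set α}, MeasurableSet B → μ B = ∫⁻ x, B.indicator 1 x ∂μ :=
    fun hB => (lintegral_indicator_one hB).symm
  have hmeas : ∀ {B : Set α}, MeasurableSet B → Measurable (B.indicator (1 : α → ℝ≥0∞)) :=
    fun hB => measurable_const.indicator hB
  calc 2 * ∑ i, μ (A i)
      = ∫⁻ x, 2 * ∑ i, (A i).indicator 1 x ∂μ := by
        rw [lintegral_const_mul _ (Finset.measurable_sum _ fun i _ => hmeas (hA i)),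
          lintegral_finsetSum _ fun i _ => hmeas (hA i)]
        simp_rw [← hind (hA _)]
    _ ≤ ∫⁻ x, 2 + ∑ p ∈ Finset.univ.offDiag, (A p.1 ∩ A p.2).indicator 1 x ∂μ :=
        lintegral_mono fun x => two_mul_sum_indicator_le A x
    _ = 2 * μ Set.univ + ∑ p ∈ Finset.univ.offDiag, μ (A p.1 ∩ A p.2) := by
        rw [lintegral_add_left measurable_const, lintegral_const,
          lintegral_finsetSum _ fun p _ => hmeas ((hA p.1).inter (hA p.2))]
        simp_rw [← hind ((hA _).inter (hA _))]

theorem exists_ne_mul_measure_inter_ge [MeasurableSpace α] (μ : Measure α) {A : ι → Set α}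
    (hA : ∀ i, MeasurableSet (A i)) (hι : 2 ≤ Fintype.card ι) :
    ∃ i j, i ≠ j ∧ 2 * ∑ m, μ (A m) - 2 * μ Set.univ
      ≤ (Fintype.card ι * (Fintype.card ι - 1) : ℝ≥0∞) * μ (A i ∩ A j) := by
  have hne : (Finset.univ : Finset ι).offDiag.Nonempty := by
    obtain ⟨i, j, hij⟩ := Fintype.exists_pair_of_one_lt_card hι
    exact ⟨(i, j), by simpa using hij⟩
  obtain ⟨p, hp, hle⟩ := Finset.exists_sum_le_card_mul hne fun p => μ (A p.1 ∩ A p.2)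
  refine ⟨p.1, p.2, (Finset.mem_offDiag.mp hp).2.2, ?_⟩
  have hcard : ((Finset.univ : Finset ι).offDiag.card : ℝ≥0∞)
      = Fintype.card ι * (Fintype.card ι - 1) := by
    rw [Finset.offDiag_card, Finset.card_univ, ENNReal.natCast_sub, Nat.cast_mul,
      ENNReal.mul_sub fun _ _ => natCast_ne_top _, mul_one]
  rw [tsub_le_iff_left, ← hcard]
  exact (two_mul_sum_measure_le μ hA).trans (by gcongr)

end Overlap

theorem MeasureTheory.IsAddFundamentalDomain.countable_of_measure_ne_zero {G α : Type*}
    [AddGroup G] [AddAction G α] [MeasurableSpace α] {s : Set α} {μ : Measure α} [SFinite μ]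
    [MeasurableConstVAdd G α] [VAddInvariantMeasure G α μ]
    (h : IsAddFundamentalDomain G s μ) (hs : μ s ≠ 0) : Countable G := by
  have hpos : {g : G | 0 < μ (g +ᵥ s)} = Set.univ :=
    Set.eq_univ_of_forall fun g => by simpa [measure_vadd, pos_iff_ne_zero] using hs
  rw [← Set.countable_univ_iff, ← hpos]
  exact Measure.countable_meas_pos_of_disjoint_iUnion₀ h.nullMeasurableSet_vadd h.aedisjoint

theorem MeasureTheory.IsAddFundamentalDomain.measure_preimage_sub_inter {E : Type*}
    [AddCommGroup E] [MeasurableSpace E] [MeasurableAdd E] {μ : Measure E} [μ.IsAddLeftInvariant]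
    {Λ : AddSubgroup E} [Countable Λ] {F S : Set E} (hF : IsAddFundamentalDomain Λ F μ)
    (hS : MeasurableSet S) (hS_inv : ∀ g : Λ, (g +ᵥ ·) ⁻¹' S = S) (u : E) :
    μ ((· - u) ⁻¹' S ∩ F) = μ (S ∩ F) := by
  have htrans : (-u) +ᵥ ((· - u) ⁻¹' S ∩ F) = S ∩ ((-u) +ᵥ F) := by
    rw [Set.vadd_set_inter]
    congr 1
    ext x
    simp [Set.mem_vadd_set_iff_neg_vadd_mem]
  calc μ ((· - u) ⁻¹' S ∩ F) = μ ((-u) +ᵥ ((· - u) ⁻¹' S ∩ F)) := (measure_vadd μ _ _).symm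
    _ = μ (S ∩ ((-u) +ᵥ F)) := by rw [htrans]
    _ = μ (S ∩ F) := (hF.vadd_of_comm (-u)).measure_set_eq hF hS hS_inv

section CubeLattice

variable {k : ℕ} {Λ : AddSubgroup (Fin k → ℝ)}

theorem add_mem_cubeLat {l x : Fin k → ℝ} (hl : l ∈ Λ) (hx : x ∈ cubeLat k Λ) :
    l + x ∈ cubeLat k Λ := by
  obtain ⟨w, l', hw, hl', rfl⟩ := hx
  exact ⟨w, l + l', hw, add_mem hl hl', by abel⟩

theorem preimage_vadd_cubeLat (g : Λ) : (g +ᵥ ·) ⁻¹' cubeLat k Λ = cubeLat k Λ := by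
  ext x
  refine ⟨fun hx => ?_, add_mem_cubeLat g.2⟩
  simpa [AddSubgroup.vadd_def] using add_mem_cubeLat (neg_mem g.2) hx

theorem measurableSet_cubeLat [Countable Λ] : MeasurableSet (cubeLat k Λ) := by
  have hunion : cubeLat k Λ =
      ⋃ l : Λ, (· - (l : Fin k → ℝ)) ⁻¹' Set.univ.pi fun _ => Set.Ioc (-(1/2)) (1/2) := by
    ext x
    simp only [cubeLat, Set.mem_iUnion, Set.mem_preimage, Set.mem_pi, Set.mem_univ,
      Set.mem_Ioc, forall_const, Subtype.exists, exists_prop]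
    constructor
    · rintro ⟨w, l, hw, hl, rfl⟩
      exact ⟨l, hl, by simpa using hw⟩
    · rintro ⟨l, hl, hw⟩
      exact ⟨x - l, l, hw, hl, by abel⟩
  rw [hunion]
  exact .iUnion fun _ => measurable_sub_const _ (.univ_pi fun _ => measurableSet_Ioc)

end CubeLattice

theorem stmt5_general (k ℓ : ℕ) (hℓ : 2 ≤ ℓ)
    (Λ : AddSubgroup (Fin k → ℝ)) (F : Set (Fin k → ℝ))
    (hF : IsAddFundamentalDomain Λ F volume) (hcov : volume F = 1) :
    ∀ v : Fin ℓ → (Fin k → ℝ), ∃ i i' : Fin ℓ, i ≠ i' ∧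
      2 * ((ℓ : ENNReal) * volume (cubeLat k Λ ∩ F) - 1) / ((ℓ : ENNReal) * ((ℓ : ENNReal) - 1))
        ≤ volume ({x | x - v i ∈ cubeLat k Λ ∧ x - v i' ∈ cubeLat k Λ} ∩ F) := by
  intro v
  have : Countable Λ := hF.countable_of_measure_ne_zero (by simp [hcov])
  set A : Fin ℓ → Set (Fin k → ℝ) := fun i => (· - v i) ⁻¹' cubeLat k Λ
  have hA : ∀ i, MeasurableSet (A i) := fun i => measurable_sub_const _ measurableSet_cubeLat
  have hAF : ∀ i, volume (A i ∩ F) = volume (cubeLat k Λ ∩ F) := fun i =>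
    hF.measure_preimage_sub_inter measurableSet_cubeLat preimage_vadd_cubeLat (v i)
  obtain ⟨i, i', hii', hle⟩ :=
    exists_ne_mul_measure_inter_ge (volume.restrict F) hA (by simpa using hℓ)
  refine ⟨i, i', hii', ENNReal.div_le_of_le_mul' ?_⟩
  change _ ≤ _ * volume (A i ∩ A i' ∩ F)
  simpa [Measure.restrict_apply, hA, (hA _).inter (hA _), hAF, hcov, ENNReal.mul_sub] using hle

/-- if `Λ ⊂ ℝ^k` is a lattice of covolume 1 (given by a fundamental
domain `F` of volume 1) and the density `D_c(W + Λ) = volume((W + Λ) ∩ F)` is at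
least `1/ℓ`, then for every `v₁,…,v_ℓ ∈ ℝ^k` there are `i ≠ i'` with
`D_c((W + Λ + v_i) ∩ (W + Λ + v_{i'})) ≥ 2(ℓ·D_c(W+Λ) − 1)/(ℓ(ℓ−1))`. -/
theorem stmt5 (k ℓ : ℕ) (hℓ : 2 ≤ ℓ)
    (Λ : AddSubgroup (Fin k → ℝ)) (F : Set (Fin k → ℝ))
    (hF : IsAddFundamentalDomain Λ F volume) (hcov : volume F = 1)
    (hdens : 1 / (ℓ : ENNReal) ≤ volume (cubeLat k Λ ∩ F)) :
    ∀ v : Fin ℓ → (Fin k → ℝ), ∃ i i' : Fin ℓ, i ≠ i' ∧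
      2 * ((ℓ : ENNReal) * volume (cubeLat k Λ ∩ F) - 1) / ((ℓ : ENNReal) * ((ℓ : ENNReal) - 1))
        ≤ volume ({x | x - v i ∈ cubeLat k Λ ∧ x - v i' ∈ cubeLat k Λ} ∩ F) :=
  stmt5_general k ℓ hℓ Λ F hF hcov
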